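/- arXiv:0812.1765 — 2 statements merged into one kernel-verified Lean document; each statement's English description precedes it below -/
import Mathlib

section
/- Suppose C: ℤ^d → ℝ is given by a sum C(x) = Σ_{j=1}^∞ Γ_j(x) where each Γ_j satisfies Γ_j(x) = 0 for |x| ≥ L^j/2 and |Γ_j(x)| ≤ c_0 L^{-(d-2)(j-1)} with L ≥ 3. Then there is a constant C_L such that |C(x)| ≤ C_L (1+|x|)^{-(d-2)} for all x ∈ ℤ^d. -/
/-!
Only the scales `j` with `L^j / 2 > |x|` contribute to `C(x)`. If `k + 1` is the first such scale,
then `1 + |x| ≤ L^(k+1)`, and the geometric tail `∑_{i ≥ k} c₀ q^{-i}`, `q = L^(d-2) > 1`, is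
`O(q^{-k}) = O((1 + |x|)^{-(d-2)})`.
-/

theorem norm_le_of_hasSum_of_norm_le_geometric_of_eq_zero {E : Type*} [NormedAddCommGroup E]
    {f : ℕ → E} {s : E} {c r : ℝ} (hs : HasSum f s) (hr₀ : 0 ≤ r) (hr₁ : r < 1)
    (hf : ∀ i, ‖f i‖ ≤ c * r ^ i) {k : ℕ} (hk : ∀ i < k, f i = 0) :
    ‖s‖ ≤ c * r ^ k * (1 - r)⁻¹ := by
  have hinit : ∑ i ∈ Finset.range k, f i = 0 :=
    Finset.sum_eq_zero fun i hi => hk i (Finset.mem_range.mp hi)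
  have htail : HasSum (fun i => f (i + k)) s := by
    simpa [hinit] using (hasSum_nat_add_iff' k).mpr hs
  refine htail.norm_le_of_bounded ((hasSum_geometric_of_lt_one hr₀ hr₁).mul_left (c * r ^ k))
    fun i => ?_
  calc ‖f (i + k)‖ ≤ c * r ^ (i + k) := hf _
    _ = c * r ^ k * r ^ i := by ring

theorem exists_first_scale_gt {L : ℝ} (hL : 2 ≤ L) (t : ℝ) :
    ∃ k : ℕ, (∀ i < k, L ^ (i + 1) / 2 ≤ t) ∧ 1 + t ≤ L ^ (k + 1) := by
  classical
  have hex : ∃ k : ℕ, t < L ^ (k + 1) / 2 := by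
    obtain ⟨n, hn⟩ := pow_unbounded_of_one_lt (2 * t) (by linarith : (1 : ℝ) < L)
    exact ⟨n, by linarith [pow_le_pow_right₀ (by linarith : (1 : ℝ) ≤ L) (by omega : n ≤ n + 1)]⟩
  refine ⟨Nat.find hex, fun i hi => not_lt.mp (Nat.find_min hex hi), ?_⟩
  have hfirst := Nat.find_spec hex
  have htwo : 2 ≤ L ^ (Nat.find hex + 1) := hL.trans (le_self_pow₀ (by linarith) (by omega))
  linarith

theorem inv_pow_le_mul_inv_of_le_pow_succ {q u : ℝ} (hq : 0 < q) (hu : 0 < u) {k : ℕ}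
    (h : u ≤ q ^ (k + 1)) : q⁻¹ ^ k ≤ q * u⁻¹ := by
  rw [inv_pow, ← div_eq_mul_inv, le_div_iff₀ hu, inv_mul_le_iff₀ (pow_pos hq k), ← pow_succ]
  exact h

/-- If `C(x) = ∑_{j≥1} Γ_j(x)` with `Γ_j(x) = 0` for `|x| ≥ L^j/2` and
`|Γ_j(x)| ≤ c₀ L^{-(d-2)(j-1)}`, then `|C(x)| ≤ C_L (1+|x|)^{-(d-2)}`. -/
theorem stmt4 (d L : ℕ) (hd : 3 ≤ d) (hL : 3 ≤ L) (c0 : ℝ)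
    (Γ : ℕ → (Fin d → ℤ) → ℝ) (C : (Fin d → ℤ) → ℝ)
    (hrange : ∀ j, 1 ≤ j → ∀ x : Fin d → ℤ, ((L : ℝ) ^ j) / 2 ≤ ‖x‖ → Γ j x = 0)
    (hbound : ∀ j, 1 ≤ j → ∀ x : Fin d → ℤ, |Γ j x| ≤ c0 * (((L : ℝ) ^ ((d - 2) * (j - 1)))⁻¹))
    (hsum : ∀ x, HasSum (fun j : ℕ => Γ (j + 1) x) (C x)) :
    ∃ CL : ℝ, ∀ x : Fin d → ℤ, |C x| ≤ CL * (((1 + ‖x‖) ^ (d - 2))⁻¹) := by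
  set q : ℝ := (L : ℝ) ^ (d - 2)
  have hL₂ : (2 : ℝ) ≤ L := by exact_mod_cast (by omega : 2 ≤ L)
  have hq : 1 < q := one_lt_pow₀ (by linarith) (by omega)
  have hq₁ : q⁻¹ < 1 := inv_lt_one_of_one_lt₀ hq
  have hgeom : ∀ i x, |Γ (i + 1) x| ≤ c0 * q⁻¹ ^ i := fun i x => by
    simpa [q, pow_mul, inv_pow] using hbound (i + 1) le_add_self x
  have hc0 : 0 ≤ c0 := (abs_nonneg _).trans (by simpa using hgeom 0 0)
  refine ⟨c0 * q * (1 - q⁻¹)⁻¹, fun x => ?_⟩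
  obtain ⟨k, hbelow, hx⟩ := exists_first_scale_gt hL₂ ‖x‖
  have hC : |C x| ≤ c0 * q⁻¹ ^ k * (1 - q⁻¹)⁻¹ :=
    norm_le_of_hasSum_of_norm_le_geometric_of_eq_zero (hsum x) (by positivity) hq₁ (hgeom · x)
      fun i hi => hrange (i + 1) le_add_self x (hbelow i hi)
  have hxq : (1 + ‖x‖) ^ (d - 2) ≤ q ^ (k + 1) := by
    rw [← pow_mul, mul_comm, pow_mul]
    exact pow_le_pow_left₀ (by positivity) hx _
  have hscale := inv_pow_le_mul_inv_of_le_pow_succ (by positivity) (by positivity) hxq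
  calc |C x| ≤ c0 * q⁻¹ ^ k * (1 - q⁻¹)⁻¹ := hC
    _ ≤ c0 * (q * ((1 + ‖x‖) ^ (d - 2))⁻¹) * (1 - q⁻¹)⁻¹ := by gcongr
    _ = c0 * q * (1 - q⁻¹)⁻¹ * ((1 + ‖x‖) ^ (d - 2))⁻¹ := by ring
end

section
/- Let (Π(x))_{x∈ℤ^d} be a function satisfying |Π(x)| ≤ C(1+|x|)^{-d}. Then for every n ≥ 2, the sum a_n = Σ_{x_2,...,x_n ∈ ℤ^d} Π(-x_2) Π(x_2-x_3) ⋯ Π(x_n) converges absolutely. -/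
/-- Access the `i`-th chain variable (out of `m` of them), with junk value `0` out of range. -/
def chainVar {d m : ℕ} (v : Fin m → (Fin d → ℤ)) (i : ℕ) : Fin d → ℤ :=
  if h : i < m then v ⟨i, h⟩ else 0

/-!
Write the summand as `∏ₖ Π(zₖ)` over the `m + 1` increments `zₖ` of the closed chain
`0, x₂, …, x_n, 0`. If `z_j` is the largest increment, its factor `(1 + |z_j|)^{-d}` is at most
`∏_{k ≠ j} (1 + |z_k|)^{-d/m}`, so the summand is bounded by
`∑_j ∏_{k ≠ j} (1 + |z_k|)^{-(d + d/m)}`.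
For fixed `j` the `m` increments `z_k`, `k ≠ j`, determine the chain, and
`∑_{z ∈ ℤ^d} (1 + |z|)^{-(d + d/m)} < ∞`.
-/

open Finset

theorem Real.rpow_neg_natCast_mul_le_prod {n : ℕ} {a s : ℝ} {b : Fin n → ℝ} (hb : ∀ i, 0 < b i)
    (hba : ∀ i, b i ≤ a) (hs : 0 ≤ s) : a ^ (-(n * s)) ≤ ∏ i, b i ^ (-s) := by
  obtain rfl | hn := eq_or_ne n 0
  · simp
  have ha : 0 < a := (hb ⟨0, Nat.pos_of_ne_zero hn⟩).trans_le (hba _)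
  calc a ^ (-(n * s)) = ∏ _i : Fin n, a ^ (-s) := by
        rw [prod_const, card_univ, Fintype.card_fin, neg_mul_eq_mul_neg,
          Real.rpow_natCast_mul ha.le, ← Real.rpow_natCast, ← Real.rpow_mul ha.le,
          ← Real.rpow_mul_natCast ha.le, mul_comm]
    _ ≤ ∏ i, b i ^ (-s) := prod_le_prod (fun _ _ => by positivity)
        fun i _ => Real.rpow_le_rpow_of_nonpos (hb i) (hba i) (neg_nonpos.mpr hs)

/-- With `a j` the largest factor, `a j ^ (-(m * s))` is spread as an extra `a k ^ (-s)` over the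
`m` other factors. -/
theorem prod_rpow_neg_le_sum_prod_succAbove {m : ℕ} {a : Fin (m + 1) → ℝ} (ha : ∀ k, 0 < a k)
    {s : ℝ} (hs : 0 ≤ s) :
    ∏ k, a k ^ (-(m * s)) ≤ ∑ j : Fin (m + 1), ∏ i, a (j.succAbove i) ^ (-(m * s + s)) := by
  obtain ⟨j, -, hj⟩ := exists_max_image univ a univ_nonempty
  calc ∏ k, a k ^ (-(m * s))
      = a j ^ (-(m * s)) * ∏ i, a (j.succAbove i) ^ (-(m * s)) :=
        Fin.prod_univ_succAbove (fun k => a k ^ (-(m * s))) j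
    _ ≤ (∏ i, a (j.succAbove i) ^ (-s)) * ∏ i, a (j.succAbove i) ^ (-(m * s)) := by
        refine mul_le_mul_of_nonneg_right ?_
          (prod_nonneg fun _ _ => (Real.rpow_pos_of_pos (ha _) _).le)
        exact Real.rpow_neg_natCast_mul_le_prod (fun _ => ha _) (fun _ => hj _ (mem_univ _)) hs
    _ = ∏ i, a (j.succAbove i) ^ (-(m * s + s)) := by
        rw [← prod_mul_distrib]
        refine prod_congr rfl fun i _ => ?_
        rw [← Real.rpow_add (ha _)]
        ring_nf
    _ ≤ ∑ j : Fin (m + 1), ∏ i, a (j.succAbove i) ^ (-(m * s + s)) :=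
        single_le_sum (f := fun j : Fin (m + 1) => ∏ i, a (j.succAbove i) ^ (-(m * s + s)))
          (fun _ _ => prod_nonneg fun _ _ => (Real.rpow_pos_of_pos (ha _) _).le) (mem_univ j)

theorem summable_one_add_norm_int_rpow_neg {q : ℝ} (hq : 1 < q) :
    Summable fun n : ℤ => (1 + ‖n‖) ^ (-q) := by
  have hnat : Summable fun n : ℕ => (1 + (n : ℝ)) ^ (-q) :=
    ((Real.summable_one_div_nat_add_rpow 1 q).mpr hq).congr fun n => by
      rw [Real.rpow_neg (by positivity), ← one_div, abs_of_nonneg (by positivity), add_comm]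
  exact .of_nat_of_neg (hnat.congr fun n => by simp) (hnat.congr fun n => by simp)

theorem summable_fin_pi_prod_of_nonneg {X : Type*} {g : X → ℝ} (hg0 : ∀ x, 0 ≤ g x)
    (hg : Summable g) (n : ℕ) : Summable fun w : Fin n → X => ∏ i, g (w i) := by
  induction n with
  | zero => exact .of_finite
  | succ n ih =>
    have hcons := hg.mul_of_nonneg ih hg0 fun w => prod_nonneg fun i _ => hg0 _
    exact ((Fin.consEquiv fun _ => X).symm.summable_iff.mpr hcons).congr
      fun w => (Fin.prod_univ_succ fun i => g (w i)).symm

theorem summable_one_add_norm_pi_int_rpow_neg {d : ℕ} {p : ℝ} (hp : (d : ℝ) < p) :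
    Summable fun x : Fin d → ℤ => (1 + ‖x‖) ^ (-p) := by
  obtain rfl | hd := eq_or_ne d 0
  · exact .of_finite
  have hd' : (0 : ℝ) < d := by positivity
  have hq : 1 < p / d := (one_lt_div hd').mpr hp
  refine (summable_fin_pi_prod_of_nonneg (fun _ => by positivity)
    (summable_one_add_norm_int_rpow_neg hq) d).of_nonneg_of_le (fun _ => by positivity)
    fun x => ?_
  have key := Real.rpow_neg_natCast_mul_le_prod (a := 1 + ‖x‖) (b := fun i => 1 + ‖x i‖)
    (fun i => by positivity) (fun i => by simpa using norm_le_pi_norm x i)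
    (div_nonneg (hd'.le.trans hp.le) hd'.le)
  rwa [mul_div_cancel₀ _ hd'.ne'] at key

/-- Telescope from `0` up to `k ≤ j`, and from `n` down to `k > j`. -/
theorem eq_of_forall_sub_succ_eq_of_ne {G : Type*} [AddCommGroup G] {x y : ℕ → G} {n j k : ℕ}
    (h0 : x 0 = y 0) (hn : x n = y n)
    (hstep : ∀ i < n, i ≠ j → x i - x (i + 1) = y i - y (i + 1)) (hk : k ≤ n) : x k = y k := by
  rcases le_or_gt k j with hkj | hjk
  · have hsum : ∑ i ∈ range k, (x i - x (i + 1)) = ∑ i ∈ range k, (y i - y (i + 1)) :=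
      sum_congr rfl fun i hi => hstep i (by simp at hi; omega) (by simp at hi; omega)
    rw [sum_range_sub', sum_range_sub', h0] at hsum
    exact sub_right_injective hsum
  · have hsum : ∑ i ∈ Ico k n, (x (i + 1) - x i) = ∑ i ∈ Ico k n, (y (i + 1) - y i) :=
      sum_congr rfl fun i hi => by
        rw [← neg_sub, hstep i (by simp at hi; omega) (by simp at hi; omega), neg_sub]
    rw [sum_Ico_sub x hk, sum_Ico_sub y hk, hn] at hsum
    exact sub_right_injective hsum

section Chain

variable {d m : ℕ}

/-- The closed chain `0, v 0, …, v (m - 1), 0`; the final `0` is the junk value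
`chainVar v m = 0`. -/
def chainPoint (v : Fin m → Fin d → ℤ) : ℕ → Fin d → ℤ
  | 0 => 0
  | k + 1 => chainVar v k

def chainIncr (v : Fin m → Fin d → ℤ) (k : ℕ) : Fin d → ℤ :=
  chainPoint v k - chainPoint v (k + 1)

theorem chain_product_eq_prod_chainIncr {R : Type*} [CommMonoid R] (f : (Fin d → ℤ) → R)
    (hm : 1 ≤ m) (v : Fin m → Fin d → ℤ) :
    f (-(chainVar v 0)) * (∏ i ∈ range (m - 1), f (chainVar v i - chainVar v (i + 1))) *
        f (chainVar v (m - 1)) = ∏ k : Fin (m + 1), f (chainIncr v k) := by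
  obtain ⟨n, rfl⟩ : ∃ n, m = n + 1 := ⟨m - 1, by omega⟩
  have hlast : chainVar v (n + 1) = 0 := by simp [chainVar]
  rw [Fin.prod_univ_eq_prod_range (fun k => f (chainIncr v k)), prod_range_succ,
    prod_range_succ']
  simp only [chainIncr, chainPoint, hlast, zero_sub, sub_zero, Nat.add_sub_cancel]
  ac_rfl

theorem injective_chainIncr_succAbove (j : Fin (m + 1)) :
    Function.Injective fun (v : Fin m → Fin d → ℤ) (i : Fin m) => chainIncr v (j.succAbove i) := by
  intro v w h
  have hpoint : ∀ k ≤ m + 1, chainPoint v k = chainPoint w k := by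
    refine fun k hk => eq_of_forall_sub_succ_eq_of_ne (j := j) rfl ?_ (fun i hi hij => ?_) hk
    · simp [chainPoint, chainVar]
    · obtain ⟨i', hi'⟩ := Fin.exists_succAbove_eq (x := ⟨i, hi⟩) (y := j) (Fin.ne_of_val_ne hij)
      simpa [chainIncr, hi'] using congrFun h i'
  funext i
  simpa [chainPoint, chainVar] using hpoint (i + 1) (by omega)

end Chain

/-- `m = n - 1` counts the summation variables `v 0 = x₂, …, v (m - 1) = x_n`. -/
theorem stmt6 (d : ℕ) (hd : 1 ≤ d) (c : ℝ) (Pk : (Fin d → ℤ) → ℝ)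
    (hPk : ∀ x : Fin d → ℤ, |Pk x| ≤ c * (1 + ‖x‖) ^ (-(d : ℝ)))
    (m : ℕ) (hm : 1 ≤ m) :
    Summable (fun v : Fin m → (Fin d → ℤ) =>
      |Pk (-(chainVar v 0)) *
          (∏ i ∈ Finset.range (m - 1), Pk (chainVar v i - chainVar v (i + 1))) *
          Pk (chainVar v (m - 1))|) := by
  simp_rw [chain_product_eq_prod_chainIncr Pk hm, abs_prod]
  have hc : 0 ≤ c := by simpa using (abs_nonneg _).trans (hPk 0)
  set s : ℝ := d / m
  have hs : 0 < s := by positivity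
  have hds : (d : ℝ) = m * s := by simp only [s]; field_simp
  have hF : Summable fun x : Fin d → ℤ => (1 + ‖x‖) ^ (-(m * s + s)) :=
    summable_one_add_norm_pi_int_rpow_neg (by linarith)
  have hbound (v : Fin m → Fin d → ℤ) : ∏ k : Fin (m + 1), |Pk (chainIncr v k)| ≤
      ∑ j : Fin (m + 1), c ^ (m + 1) * ∏ i, (1 + ‖chainIncr v (j.succAbove i)‖) ^ (-(m * s + s)) :=
    calc ∏ k : Fin (m + 1), |Pk (chainIncr v k)|
        ≤ ∏ k : Fin (m + 1), c * (1 + ‖chainIncr v k‖) ^ (-(m * s)) :=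
          prod_le_prod (fun _ _ => abs_nonneg _) fun k _ => hds ▸ hPk _
      _ = c ^ (m + 1) * ∏ k : Fin (m + 1), (1 + ‖chainIncr v k‖) ^ (-(m * s)) := by
          rw [prod_mul_distrib, prod_const, card_univ, Fintype.card_fin]
      _ ≤ _ := by
          rw [← mul_sum]
          gcongr
          exact prod_rpow_neg_le_sum_prod_succAbove (fun _ => by positivity) hs.le
  refine .of_nonneg_of_le (fun _ => prod_nonneg fun _ _ => abs_nonneg _) hbound
    (summable_sum fun j _ => ?_)
  exact ((summable_fin_pi_prod_of_nonneg (fun _ => by positivity) hF m).comp_injective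
    (injective_chainIncr_succAbove j)).mul_left _
end
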